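/- Let L be a finite ranked atomic geometric meet semi-lattice. For each l ∈ L choose a set of atoms S(l) with ∨S(l) = l and |S(l)| = r(l). Then the projections of the exterior monomials e_{S(l)}, l ∈ L, form a k-basis of ⋀L = ⋀V / I_L over a field k of characteristic 2. -/

import Mathlib

/-- The rank function is compatible with the covering relation. -/
def CoverRank {P : Type*} [PartialOrder P] (rk : P → ℕ) : Prop :=
  ∀ a b : P, a ⋖ b → rk b = rk a + 1

/-- The rank function is strictly monotone (the poset is graded). -/
def RankStrictMono {P : Type*} [PartialOrder P] (rk : P → ℕ) : Prop :=
  ∀ a b : P, a < b → rk a < rk b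

/-- The diamond property: every interval of rank 2 contains at least two
intermediate elements. -/
def DiamondProp {P : Type*} [PartialOrder P] (rk : P → ℕ) : Prop :=
  ∀ x y : P, x < y → rk y = rk x + 2 →
    ∃ a b : P, a ≠ b ∧ a ∈ Set.Ioo x y ∧ b ∈ Set.Ioo x y

/-- The parallelogram property (Definition of the paper): for every `x̂` and every
`y > x̂`, if the chain `x̂ = x 0 ⋖ x 1 ⋖ ... ⋖ x r` (`r > 0`) equals the closed
interval `[x̂, x r]`, is maximal w.r.t. inclusion among chain-intervals above `x̂`,
and `r` is less than the rank of `y` in `P(x̂)`, then whenever `x i < y` and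
`x (i+1) ≰ y` for some `0 < i ≤ r` (interpreting, for `i = r`, the latter as
`[x̂, y]` is not a chain), there exists `y'` with `x̂ ≤ y'`, `y' ⋖ y`,
`x (i-1) < y'` and `¬ x i ≤ y'`. -/
def ParallelogramProp {P : Type*} [PartialOrder P] (rk : P → ℕ) : Prop :=
  ∀ (xh y : P) (r : ℕ) (x : ℕ → P),
    xh < y → 0 < r → x 0 = xh →
    (∀ j, j < r → x j ⋖ x (j + 1)) →
    Set.Icc xh (x r) = {p | ∃ j ≤ r, p = x j} →
    (∀ z : P, x r < z → ¬ IsChain (· ≤ ·) (Set.Icc xh z)) →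
    r < rk y - rk xh →
    ∀ i, 0 < i → i ≤ r → x i < y →
      ((i < r ∧ ¬ x (i + 1) ≤ y) ∨ (i = r ∧ ¬ IsChain (· ≤ ·) (Set.Icc xh y))) →
      ∃ y' : P, xh ≤ y' ∧ y' ⋖ y ∧ x (i - 1) < y' ∧ ¬ x i ≤ y'

/-- Atomic: every element is the join of the atoms (rank-1 elements) below it. -/
def AtomicRk {L : Type*} [PartialOrder L] (rk : L → ℕ) : Prop :=
  ∀ l : L, IsLUB {a : L | rk a = 1 ∧ a ≤ l} l

/-!
In characteristic 2 the exterior algebra is commutative, and the monomials `e_S` over finite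
sets `S` of atoms form a basis with `e_S * e_T = e_{S ∪ T}` for disjoint `S`, `T` and `0`
otherwise. Let `Φ : ⋀V → k^L` send `e_S` to the indicator of the `l` that `S` spans
independently (`∨S = l` and `|S| = r(l)`). Semimodularity makes subsets of independent sets
independent, so `Φ (e_W * e_S) = 0` when `S` is dependent; and if `S`, `T` both span `l`
independently, `W ∪ S` and `W ∪ T` have the same upper bounds and size when `W` misses both,
while `W ∪ S` is dependent when `W` meets `T` but not `S`. As `I_L` is spanned by the
products `e_W * g` with `g` a generator, `Φ` factors through `⋀L`, where it sends the class
of `e_{S(l)}` to the `l`-th unit vector. Those classes span because modulo `I_L` every `e_S`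
is `0` or some `e_{S(l)}`.
-/

namespace ExteriorAlgebra

variable {R M I : Type*} [CommRing R] [AddCommGroup M] [Module R M]

theorem ι_mul_ι_comm_of_charTwo [CharP R 2] (x y : M) : ι R x * ι R y = ι R y * ι R x :=
  add_right_cancel <| (ι_add_mul_swap x y).trans <| by
    rw [← two_smul R, CharTwo.two_eq_zero, zero_smul]

theorem commute_of_charTwo [CharP R 2] (x y : ExteriorAlgebra R M) : Commute x y := by
  have hι : ∀ (m : M) (y : ExteriorAlgebra R M), Commute (ι R m) y := by
    intro m y
    induction y using ExteriorAlgebra.induction with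
    | algebraMap r => exact Algebra.commute_algebraMap_right r _
    | ι n => exact ι_mul_ι_comm_of_charTwo m n
    | mul a b ha hb => exact ha.mul_right hb
    | add a b ha hb => exact ha.add_right hb
  induction x using ExteriorAlgebra.induction with
  | algebraMap r => exact Algebra.commute_algebraMap_left r _
  | ι m => exact hι m y
  | mul a b ha hb => exact ha.mul_left hb
  | add a b ha hb => exact ha.add_left hb

variable (R) in
noncomputable def monomial (v : I → M) (s : Finset I) : ExteriorAlgebra R M :=
  (s.toList.map fun i => ι R (v i)).prod

theorem list_prod_eq_monomial [CharP R 2] [DecidableEq I] (v : I → M) {l : List I} {s : Finset I}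
    (hl : l.Nodup) (hs : l.toFinset = s) :
    (l.map fun i => ι R (v i)).prod = monomial R v s :=
  ((List.perm_of_nodup_nodup_toFinset_eq hl s.nodup_toList (by simp [hs])).map _).prod_eq'
    (List.pairwise_of_forall fun _ _ => commute_of_charTwo _ _)

theorem monomial_insert [CharP R 2] [DecidableEq I] (v : I → M) {s : Finset I} {i : I}
    (hi : i ∉ s) :
    monomial R v (insert i s) = ι R (v i) * monomial R v s := by
  rw [← list_prod_eq_monomial v (l := i :: s.toList) (by simp [hi, s.nodup_toList]) (by simp)]
  rfl

theorem monomial_mul_monomial [CharP R 2] [DecidableEq I] (v : I → M) (s t : Finset I) :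
    monomial R v s * monomial R v t = if Disjoint s t then monomial R v (s ∪ t) else 0 := by
  split_ifs with hst
  · have hnodup : (s.toList ++ t.toList).Nodup := List.nodup_append.2
      ⟨s.nodup_toList, t.nodup_toList, by simpa using Finset.disjoint_left.1 hst⟩
    rw [← list_prod_eq_monomial v (s := s ∪ t) hnodup (by simp), List.map_append,
      List.prod_append]
    rfl
  · obtain ⟨i, his, hit⟩ := Finset.not_disjoint_iff.1 hst
    rw [← Finset.insert_erase his, ← Finset.insert_erase hit,
      monomial_insert v (Finset.notMem_erase i s), monomial_insert v (Finset.notMem_erase i t),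
      (commute_of_charTwo _ _).mul_mul_mul_comm, ι_sq_zero, zero_mul]

theorem monomial_eq_basis [CharP R 2] [LinearOrder I] (b : Module.Basis I R M) (s : Finset I) :
    monomial R b s = b.ExteriorAlgebra s := by
  set f := s.orderEmbOfFin rfl
  have hf : (List.ofFn f).toFinset = s := by
    ext i
    simp only [List.mem_toFinset, List.mem_ofFn]
    exact Set.ext_iff.1 (s.range_orderEmbOfFin rfl) i
  rw [ExteriorAlgebra.basis_apply_ofCard b rfl, ιMulti_family, ιMulti_apply,
    ← list_prod_eq_monomial b (List.nodup_ofFn.2 f.injective) hf, List.map_ofFn]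
  rfl

/-- Mathlib's monomial basis needs a linear order on `I`; any one will do, since in
characteristic 2 its vectors are the order-free `monomial R b s` (`coe_monomialBasis`). -/
noncomputable def monomialBasis (b : Module.Basis I R M) :
    Module.Basis (Finset I) R (ExteriorAlgebra R M) :=
  letI := IsWellOrder.linearOrder (WellOrderingRel (α := I))
  b.ExteriorAlgebra

theorem coe_monomialBasis [CharP R 2] (b : Module.Basis I R M) :
    ⇑(monomialBasis b) = monomial R b := by
  let := IsWellOrder.linearOrder (WellOrderingRel (α := I))
  funext s
  exact (monomial_eq_basis b s).symm

end ExteriorAlgebra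

section Atoms

variable (k : Type*) [Field k] {L : Type*} (rk : L → ℕ)

abbrev Atoms := {a : L // rk a = 1}

variable [DecidableEq L]

noncomputable def atomMonomial (S : Finset (Atoms rk)) : ExteriorAlgebra k (Atoms rk → k) :=
  ExteriorAlgebra.monomial k (fun a => Pi.single a 1) S

variable [Finite L]

noncomputable def atomMonomialBasis :
    Module.Basis (Finset (Atoms rk)) k (ExteriorAlgebra k (Atoms rk → k)) :=
  ExteriorAlgebra.monomialBasis (Pi.basisFun k (Atoms rk))

theorem coe_atomMonomialBasis [CharP k 2] : ⇑(atomMonomialBasis k rk) = atomMonomial k rk := by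
  rw [atomMonomialBasis, ExteriorAlgebra.coe_monomialBasis]
  exact congrArg (ExteriorAlgebra.monomial k) (funext (Pi.basisFun_apply k _))

end Atoms

section FaceIdeal

variable (k : Type*) [Field k] {L : Type*} [PartialOrder L] (rk : L → ℕ)

def IsIndepJoin (S : Finset (Atoms rk)) (l : L) : Prop :=
  IsLUB (Subtype.val '' (S : Set (Atoms rk))) l ∧ rk l = S.card

noncomputable def indepJoinIndicator (S : Finset (Atoms rk)) : L → k :=
  {l | IsIndepJoin rk S l}.indicator 1

variable [DecidableEq L]

def faceIdealGens : Set (ExteriorAlgebra k (Atoms rk → k)) :=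
  {x | ∃ S : Finset (Atoms rk),
    (¬ ∃ l : L, IsLUB (Subtype.val '' (S : Set (Atoms rk))) l) ∧ x = atomMonomial k rk S} ∪
  {x | ∃ S : Finset (Atoms rk),
    (∃ l : L, IsLUB (Subtype.val '' (S : Set (Atoms rk))) l ∧ rk l ≠ S.card) ∧
      x = atomMonomial k rk S} ∪
  {x | ∃ S T : Finset (Atoms rk), S ≠ T ∧
    (∃ l : L, IsLUB (Subtype.val '' (S : Set (Atoms rk))) l ∧
      IsLUB (Subtype.val '' (T : Set (Atoms rk))) l ∧ rk l = S.card ∧ S.card = T.card) ∧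
    x = atomMonomial k rk S - atomMonomial k rk T}

def faceIdeal : Submodule k (ExteriorAlgebra k (Atoms rk → k)) :=
  Submodule.span k {x | ∃ g ∈ faceIdealGens k rk, ∃ w w' : ExteriorAlgebra k (Atoms rk → k),
    x = w * g * w'}

variable {k rk}

theorem mem_faceIdeal_of_mem_faceIdealGens {g : ExteriorAlgebra k (Atoms rk → k)}
    (hg : g ∈ faceIdealGens k rk) : g ∈ faceIdeal k rk :=
  Submodule.subset_span ⟨g, hg, 1, 1, by rw [one_mul, mul_one]⟩

theorem atomMonomial_mem_faceIdeal {S : Finset (Atoms rk)} (hS : ¬∃ l, IsIndepJoin rk S l) :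
    atomMonomial k rk S ∈ faceIdeal k rk := by
  refine mem_faceIdeal_of_mem_faceIdealGens (Or.inl ?_)
  by_cases hjoin : ∃ l, IsLUB (Subtype.val '' (S : Set (Atoms rk))) l
  · obtain ⟨l, hl⟩ := hjoin
    exact Or.inr ⟨S, ⟨l, hl, fun hrk => hS ⟨l, hl, hrk⟩⟩, rfl⟩
  · exact Or.inl ⟨S, hjoin, rfl⟩

theorem atomMonomial_sub_mem_faceIdeal {S T : Finset (Atoms rk)} {l : L}
    (hS : IsIndepJoin rk S l) (hT : IsIndepJoin rk T l) :
    atomMonomial k rk S - atomMonomial k rk T ∈ faceIdeal k rk := by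
  by_cases hST : S = T
  · rw [hST, sub_self]
    exact zero_mem _
  · exact mem_faceIdeal_of_mem_faceIdealGens
      (Or.inr ⟨S, T, hST, ⟨l, hS.1, hT.1, hS.2, hS.2.symm.trans hT.2⟩, rfl⟩)

theorem indepJoinIndicator_eq_single {S : Finset (Atoms rk)} {l : L} (hS : IsIndepJoin rk S l) :
    indepJoinIndicator k rk S = Pi.single l (1 : k) := by
  funext j
  by_cases hj : j = l
  · subst hj
    rw [Pi.single_eq_same]
    exact Set.indicator_of_mem (s := {l | IsIndepJoin rk S l}) hS (1 : L → k)
  · rw [Pi.single_eq_of_ne hj]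
    exact Set.indicator_of_notMem (fun h => hj (h.1.unique hS.1)) _

theorem indepJoinIndicator_union_congr {S T W : Finset (Atoms rk)} {l : L}
    (hS : IsIndepJoin rk S l) (hT : IsIndepJoin rk T l) (hWS : Disjoint W S) (hWT : Disjoint W T) :
    indepJoinIndicator k rk (W ∪ S) = indepJoinIndicator k rk (W ∪ T) := by
  have hub : ∀ V : Finset (Atoms rk),
      upperBounds (Subtype.val '' ((W ∪ V : Finset _) : Set (Atoms rk))) =
        upperBounds (Subtype.val '' (W : Set (Atoms rk))) ∩
          upperBounds (Subtype.val '' (V : Set (Atoms rk))) := by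
    intro V
    rw [Finset.coe_union, Set.image_union, upperBounds_union]
  have key : {j | IsIndepJoin rk (W ∪ S) j} = {j | IsIndepJoin rk (W ∪ T) j} := by
    ext j
    exact and_congr (isLUB_congr (by rw [hub, hub, hS.1.upperBounds_eq, hT.1.upperBounds_eq]))
      (by rw [Finset.card_union_of_disjoint hWS, Finset.card_union_of_disjoint hWT, ← hS.2,
        ← hT.2])
  rw [indepJoinIndicator, indepJoinIndicator, key]

end FaceIdeal

section Semimodular

variable {L : Type*} [SemilatticeInf L] {rk : L → ℕ}

def RankSemimodular (rk : L → ℕ) : Prop :=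
  ∀ x y j : L, IsLUB ({x, y} : Set L) j → rk (x ⊓ y) + rk j ≤ rk x + rk y

theorem rank_le_add_one_of_isLUB_pair (hgeo : RankSemimodular rk) {x a j : L} (ha : rk a = 1)
    (hj : IsLUB {x, a} j) : rk j ≤ rk x + 1 := by
  have := hgeo x a j hj
  omega

theorem exists_isLUB_of_mem_upperBounds [Finite L] {s : Set L} {u : L}
    (hu : u ∈ upperBounds s) : ∃ l, IsLUB s l := by
  have hfin := Set.toFinite (upperBounds s)
  have hne : hfin.toFinset.Nonempty := ⟨u, hfin.mem_toFinset.2 hu⟩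
  exact ⟨_, isGLB_upperBounds.1 (by simpa using hfin.toFinset.isGLB_inf' hne)⟩

theorem IsLUB.isLUB_pair_of_insert {s : Set L} {x a j : L} (hx : IsLUB s x)
    (hj : IsLUB (insert a s) j) : IsLUB {x, a} j := by
  refine (isLUB_congr ?_).1 hj
  rw [upperBounds_insert, upperBounds_insert, upperBounds_singleton, hx.upperBounds_eq,
    Set.inter_comm]

theorem rank_le_add_card_of_isLUB_union [Finite L] [DecidableEq L] (hgeo : RankSemimodular rk)
    {S : Finset (Atoms rk)} {s : L} (hs : IsLUB (Subtype.val '' (S : Set (Atoms rk))) s)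
    (T : Finset (Atoms rk)) {j : L}
    (hj : IsLUB (Subtype.val '' ((S ∪ T : Finset _) : Set (Atoms rk))) j) :
    rk j ≤ rk s + T.card := by
  induction T using Finset.induction_on generalizing j with
  | empty =>
    rw [Finset.union_empty] at hj
    rw [hj.unique hs, Finset.card_empty, add_zero]
  | insert a T ha ih =>
    rw [Finset.union_insert, Finset.coe_insert, Set.image_insert_eq] at hj
    obtain ⟨j', hj'⟩ :=
      exists_isLUB_of_mem_upperBounds fun t ht => hj.1 (Set.mem_insert_of_mem _ ht)
    have h1 := rank_le_add_one_of_isLUB_pair hgeo a.2 (hj'.isLUB_pair_of_insert hj)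
    have h2 := ih hj'
    rw [Finset.card_insert_of_notMem ha]
    omega

theorem rank_le_card_of_isLUB [Finite L] [OrderBot L] [DecidableEq L] (hgeo : RankSemimodular rk)
    (h0 : rk ⊥ = 0) {S : Finset (Atoms rk)} {s : L}
    (hs : IsLUB (Subtype.val '' (S : Set (Atoms rk))) s) : rk s ≤ S.card := by
  simpa [h0] using
    rank_le_add_card_of_isLUB_union hgeo (S := ∅) (s := ⊥) (by simp) S (by simpa using hs)

theorem IsIndepJoin.of_subset [Finite L] [OrderBot L] [DecidableEq L]
    (hgeo : RankSemimodular rk) (h0 : rk ⊥ = 0) {S U : Finset (Atoms rk)} {s u : L}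
    (hU : IsIndepJoin rk U u) (hSU : S ⊆ U)
    (hs : IsLUB (Subtype.val '' (S : Set (Atoms rk))) s) : IsIndepJoin rk S s := by
  refine ⟨hs, le_antisymm (rank_le_card_of_isLUB hgeo h0 hs) ?_⟩
  have := rank_le_add_card_of_isLUB_union hgeo hs (U \ S) (j := u)
    (by rw [Finset.union_sdiff_of_subset hSU]; exact hU.1)
  rw [Finset.card_sdiff_of_subset hSU, hU.2] at this
  have := Finset.card_le_card hSU
  omega

theorem IsIndepJoin.exists_of_subset [Finite L] [OrderBot L] [DecidableEq L]
    (hgeo : RankSemimodular rk) (h0 : rk ⊥ = 0) {S U : Finset (Atoms rk)} {u : L}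
    (hU : IsIndepJoin rk U u) (hSU : S ⊆ U) :
    ∃ s, IsIndepJoin rk S s :=
  have ⟨s, hs⟩ := exists_isLUB_of_mem_upperBounds <|
    upperBounds_mono_set (Set.image_mono (Finset.coe_subset.2 hSU)) hU.1.1
  ⟨s, hU.of_subset hgeo h0 hSU hs⟩

theorem IsIndepJoin.not_exists_insert [DecidableEq L] {S : Finset (Atoms rk)} {l : L}
    (hS : IsIndepJoin rk S l) {a : Atoms rk} (ha : a ∉ S) (hal : a.1 ≤ l) :
    ¬∃ j, IsIndepJoin rk (insert a S) j := by
  rintro ⟨j, hj, hjrk⟩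
  have hl : IsLUB (Subtype.val '' ((insert a S : Finset _) : Set (Atoms rk))) l := by
    rw [Finset.coe_insert, Set.image_insert_eq]
    exact ⟨Set.forall_insert_of_forall hS.1.1 hal,
      fun b hb => hS.1.2 fun x hx => hb (Set.mem_insert_of_mem _ hx)⟩
  rw [hj.unique hl, hS.2, Finset.card_insert_of_notMem ha] at hjrk
  omega

theorem indepJoinIndicator_eq_zero_of_subset {k : Type*} [Field k] [Finite L] [OrderBot L]
    [DecidableEq L] (hgeo : RankSemimodular rk) (h0 : rk ⊥ = 0) {S U : Finset (Atoms rk)}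
    (hS : ¬∃ s, IsIndepJoin rk S s) (hSU : S ⊆ U) :
    indepJoinIndicator k rk U = 0 :=
  funext fun _ => Set.indicator_of_notMem (fun hu => hS (hu.exists_of_subset hgeo h0 hSU)) _

theorem indepJoinIndicator_union_eq_zero {k : Type*} [Field k] [Finite L] [OrderBot L]
    [DecidableEq L] (hgeo : RankSemimodular rk) (h0 : rk ⊥ = 0) {S T W : Finset (Atoms rk)}
    {l : L} (hS : IsIndepJoin rk S l) (hT : IsLUB (Subtype.val '' (T : Set (Atoms rk))) l)
    (hWS : Disjoint W S) (hWT : ¬Disjoint W T) : indepJoinIndicator k rk (W ∪ S) = 0 := by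
  obtain ⟨a, haW, haT⟩ := Finset.not_disjoint_iff.1 hWT
  refine indepJoinIndicator_eq_zero_of_subset hgeo h0
    (hS.not_exists_insert (Finset.disjoint_left.1 hWS haW) (hT.1 ⟨a, haT, rfl⟩)) ?_
  exact Finset.insert_subset (Finset.mem_union_left _ haW) Finset.subset_union_right

end Semimodular

section FaceRing

variable {k : Type*} [Field k] {L : Type*} [SemilatticeInf L] [DecidableEq L] [Finite L]
  {rk : L → ℕ}

variable (k rk) in
noncomputable def indepJoinFunctional : ExteriorAlgebra k (Atoms rk → k) →ₗ[k] (L → k) :=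
  (atomMonomialBasis k rk).constr k (indepJoinIndicator k rk)

variable [CharP k 2]

theorem indepJoinFunctional_atomMonomial (S : Finset (Atoms rk)) :
    indepJoinFunctional k rk (atomMonomial k rk S) = indepJoinIndicator k rk S := by
  rw [indepJoinFunctional, ← coe_atomMonomialBasis, Module.Basis.constr_basis]

theorem indepJoinFunctional_atomMonomial_mul (W S : Finset (Atoms rk)) :
    indepJoinFunctional k rk (atomMonomial k rk W * atomMonomial k rk S) =
      if Disjoint W S then indepJoinIndicator k rk (W ∪ S) else 0 := by
  rw [atomMonomial, atomMonomial, ExteriorAlgebra.monomial_mul_monomial]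
  split_ifs
  · exact indepJoinFunctional_atomMonomial _
  · exact map_zero _

theorem indepJoinFunctional_atomMonomial_mul_eq_zero [OrderBot L] (hgeo : RankSemimodular rk)
    (h0 : rk ⊥ = 0) {g : ExteriorAlgebra k (Atoms rk → k)} (hg : g ∈ faceIdealGens k rk)
    (W : Finset (Atoms rk)) : indepJoinFunctional k rk (atomMonomial k rk W * g) = 0 := by
  rcases hg with (⟨S, hS, rfl⟩ | ⟨S, ⟨l, hl, hrk⟩, rfl⟩) |
    ⟨S, T, -, ⟨l, hS, hT, hrk, hcard⟩, rfl⟩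
  · rw [indepJoinFunctional_atomMonomial_mul]
    split_ifs
    · exact indepJoinIndicator_eq_zero_of_subset hgeo h0 (fun ⟨s, hs⟩ => hS ⟨s, hs.1⟩)
        Finset.subset_union_right
    · rfl
  · rw [indepJoinFunctional_atomMonomial_mul]
    split_ifs
    · exact indepJoinIndicator_eq_zero_of_subset hgeo h0
        (fun ⟨s, hs⟩ => hrk (hl.unique hs.1 ▸ hs.2)) Finset.subset_union_right
    · rfl
  · have hS' : IsIndepJoin rk S l := ⟨hS, hrk⟩
    have hT' : IsIndepJoin rk T l := ⟨hT, hcard ▸ hrk⟩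
    rw [mul_sub, map_sub, sub_eq_zero, indepJoinFunctional_atomMonomial_mul,
      indepJoinFunctional_atomMonomial_mul]
    split_ifs with hWS hWT hWT
    · exact indepJoinIndicator_union_congr hS' hT' hWS hWT
    · exact indepJoinIndicator_union_eq_zero hgeo h0 hS' hT hWS hWT
    · exact (indepJoinIndicator_union_eq_zero hgeo h0 hT' hS hWT hWS).symm
    · rfl

theorem faceIdeal_le_ker [OrderBot L] (hgeo : RankSemimodular rk) (h0 : rk ⊥ = 0) :
    faceIdeal k rk ≤ LinearMap.ker (indepJoinFunctional k rk) := by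
  refine Submodule.span_le.2 ?_
  rintro _ ⟨g, hg, w, w', rfl⟩
  have hmul : indepJoinFunctional k rk ∘ₗ LinearMap.mulRight k g = 0 :=
    (atomMonomialBasis k rk).ext fun W => by
      rw [LinearMap.comp_apply, LinearMap.mulRight_apply, LinearMap.zero_apply,
        coe_atomMonomialBasis]
      exact indepJoinFunctional_atomMonomial_mul_eq_zero hgeo h0 hg W
  rw [SetLike.mem_coe, LinearMap.mem_ker, mul_assoc, (ExteriorAlgebra.commute_of_charTwo g w').eq,
    ← mul_assoc]
  exact LinearMap.congr_fun hmul (w * w')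

end FaceRing

theorem linearIndependent_mkQ_atomMonomial {k : Type*} [Field k] [CharP k 2] {L : Type*}
    [SemilatticeInf L] [OrderBot L] [DecidableEq L] [Finite L] {rk : L → ℕ}
    (hgeo : RankSemimodular rk) (h0 : rk ⊥ = 0) {Sl : L → Finset (Atoms rk)}
    (hSl : ∀ l, IsIndepJoin rk (Sl l) l) :
    LinearIndependent k fun l => (faceIdeal k rk).mkQ (atomMonomial k rk (Sl l)) := by
  refine LinearIndependent.of_comp ((faceIdeal k rk).liftQ _ (faceIdeal_le_ker hgeo h0)) ?_
  have hsingle : (faceIdeal k rk).liftQ _ (faceIdeal_le_ker hgeo h0) ∘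
      (fun l => (faceIdeal k rk).mkQ (atomMonomial k rk (Sl l))) = fun l => Pi.single l 1 :=
    funext fun l => by
      rw [Function.comp_apply, Submodule.mkQ_apply, Submodule.liftQ_apply,
        indepJoinFunctional_atomMonomial, indepJoinIndicator_eq_single (hSl l)]
  rw [hsingle]
  exact Pi.linearIndependent_single_one L k

theorem span_mkQ_atomMonomial_eq_top {k : Type*} [Field k] [CharP k 2] {L : Type*}
    [PartialOrder L] [DecidableEq L] [Finite L] {rk : L → ℕ} {Sl : L → Finset (Atoms rk)}
    (hSl : ∀ l, IsIndepJoin rk (Sl l) l) :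
    Submodule.span k (Set.range fun l => (faceIdeal k rk).mkQ (atomMonomial k rk (Sl l))) =
      ⊤ := by
  rw [eq_top_iff, ← (faceIdeal k rk).range_mkQ, LinearMap.range_eq_map,
    ← (atomMonomialBasis k rk).span_eq, Submodule.map_span_le, coe_atomMonomialBasis]
  rintro _ ⟨S, rfl⟩
  by_cases hS : ∃ l, IsIndepJoin rk S l
  · obtain ⟨l, hl⟩ := hS
    rw [Submodule.mkQ_apply,
      (Submodule.Quotient.eq _).2 (atomMonomial_sub_mem_faceIdeal hl (hSl l))]
    exact Submodule.subset_span ⟨l, rfl⟩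
  · rw [Submodule.mkQ_apply, (Submodule.Quotient.mk_eq_zero _).2 (atomMonomial_mem_faceIdeal hS)]
    exact zero_mem _

theorem exterior_face_ring_basis_general {L : Type*} [SemilatticeInf L] [OrderBot L]
    [Fintype L] [DecidableEq L]
    (rk : L → ℕ) (h0 : rk ⊥ = 0)
    (hgeo : ∀ x y j : L, IsLUB ({x, y} : Set L) j →
      rk (x ⊓ y) + rk j ≤ rk x + rk y)
    (k : Type*) [Field k] (hchar : ringChar k = 2) :
    let A := {a : L // rk a = 1}
    let V := A → k
    let e : Finset A → ExteriorAlgebra k V := fun S =>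
      (S.toList.map fun a => ExteriorAlgebra.ι k (Pi.single a (1 : k))).prod
    let jn : Finset A → L → Prop := fun S l =>
      IsLUB (Subtype.val '' (↑S : Set A)) l
    let gens : Set (ExteriorAlgebra k V) :=
      {x | ∃ S : Finset A, (¬ ∃ l : L, jn S l) ∧ x = e S} ∪
      {x | ∃ S : Finset A, (∃ l : L, jn S l ∧ rk l ≠ S.card) ∧ x = e S} ∪
      {x | ∃ S T : Finset A, S ≠ T ∧
        (∃ l : L, jn S l ∧ jn T l ∧ rk l = S.card ∧ S.card = T.card) ∧
        x = e S - e T}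
    let I : Submodule k (ExteriorAlgebra k V) :=
      Submodule.span k
        {x | ∃ g ∈ gens, ∃ w w' : ExteriorAlgebra k V, x = w * g * w'}
    ∀ Sl : L → Finset A,
      (∀ l : L, jn (Sl l) l ∧ (Sl l).card = rk l) →
      LinearIndependent k (fun l : L => I.mkQ (e (Sl l))) ∧
      Submodule.span k (Set.range fun l : L => I.mkQ (e (Sl l))) = ⊤ := by
  intro A V e jn gens I Sl hSl
  have : CharP k 2 := ringChar.eq_iff.1 hchar
  have hSl' : ∀ l, IsIndepJoin rk (Sl l) l := fun l => ⟨(hSl l).1, (hSl l).2.symm⟩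
  exact ⟨linearIndependent_mkQ_atomMonomial hgeo h0 hSl', span_mkQ_atomMonomial_eq_top hSl'⟩

/-- Proposition 3.2 of the paper: if for each `l ∈ L` one chooses a set of atoms
`Sl l` with join `l` and cardinality `rk l`, then the projections of the exterior
monomials `e (Sl l)`, `l ∈ L`, form a `k`-basis of `⋀L = ⋀V / I_L` (char `k` = 2). -/
theorem exterior_face_ring_basis {L : Type*} [SemilatticeInf L] [OrderBot L]
    [Fintype L] [DecidableEq L]
    (rk : L → ℕ) (h0 : rk ⊥ = 0) (hc : CoverRank rk) (hm : RankStrictMono rk)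
    (hat : AtomicRk rk)
    (hgeo : ∀ x y j : L, IsLUB ({x, y} : Set L) j →
      rk (x ⊓ y) + rk j ≤ rk x + rk y)
    (k : Type*) [Field k] (hchar : ringChar k = 2) :
    let A := {a : L // rk a = 1}
    let V := A → k
    let e : Finset A → ExteriorAlgebra k V := fun S =>
      (S.toList.map fun a => ExteriorAlgebra.ι k (Pi.single a (1 : k))).prod
    let jn : Finset A → L → Prop := fun S l =>
      IsLUB (Subtype.val '' (↑S : Set A)) l
    let gens : Set (ExteriorAlgebra k V) :=
      {x | ∃ S : Finset A, (¬ ∃ l : L, jn S l) ∧ x = e S} ∪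
      {x | ∃ S : Finset A, (∃ l : L, jn S l ∧ rk l ≠ S.card) ∧ x = e S} ∪
      {x | ∃ S T : Finset A, S ≠ T ∧
        (∃ l : L, jn S l ∧ jn T l ∧ rk l = S.card ∧ S.card = T.card) ∧
        x = e S - e T}
    let I : Submodule k (ExteriorAlgebra k V) :=
      Submodule.span k
        {x | ∃ g ∈ gens, ∃ w w' : ExteriorAlgebra k V, x = w * g * w'}
    ∀ Sl : L → Finset A,
      (∀ l : L, jn (Sl l) l ∧ (Sl l).card = rk l) →
      LinearIndependent k (fun l : L => I.mkQ (e (Sl l))) ∧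
      Submodule.span k (Set.range fun l : L => I.mkQ (e (Sl l))) = ⊤ :=
  exterior_face_ring_basis_general rk h0 hgeo k hchar
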